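/- For every rooted unlabeled tree t on n vertices, m(t) n(t) / ∏_{i=2}^n C(i,2) = n · 2^{n-1} / (|SG(t)| · ∏_{v ∈ t} h(v)²), where h(v) is the number of vertices of the subtree rooted at v and SG(t) is the symmetry group of t. -/

import Mathlib

/-!
Common definitions: rooted unlabeled trees on `n` vertices, the growth/pruning
coefficients `n(t,t')` and `m(t,t')`, the measure `π_n`, the up/down transition
probabilities, the down-up and up-down Markov chains, and separation distance.

A rooted tree is represented as `PreTree.node cs` where `cs` is the list of
subtrees of the root's children.  An *unlabeled* rooted tree is represented by
its canonical representative (children recursively sorted by an injective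
encoding into `ℕ`), and `trees n` is the finite set of canonical rooted trees
on `n` vertices.
-/

namespace RootedTreeChain

inductive PreTree : Type where
  | node : List PreTree → PreTree

namespace PreTree

/- Number of vertices. -/
mutual
  def size : PreTree → ℕ
    | .node cs => 1 + sizeList cs
  def sizeList : List PreTree → ℕ
    | [] => 0
    | t :: ts => size t + sizeList ts
end

mutual
def deq : (a b : PreTree) → Decidable (a = b)
  | .node cs, .node ds =>
    match deqList cs ds with
    | isTrue h => isTrue (by rw [h])
    | isFalse h => isFalse (by intro hh; cases hh; exact h rfl)
def deqList : (as bs : List PreTree) → Decidable (as = bs)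
  | [], [] => isTrue rfl
  | [], _ :: _ => isFalse (by simp)
  | _ :: _, [] => isFalse (by simp)
  | a :: as, b :: bs =>
    match deq a b, deqList as bs with
    | isTrue h1, isTrue h2 => isTrue (by rw [h1, h2])
    | isFalse h1, _ => isFalse (by intro hh; injection hh; contradiction)
    | _, isFalse h2 => isFalse (by intro hh; injection hh; contradiction)
end

instance : DecidableEq PreTree := deq

/- An injective encoding of trees into `ℕ`, used only to sort children
so that each unlabeled rooted tree has a unique canonical representative. -/
mutual
  def enc : PreTree → ℕ
    | .node cs => encList cs
  def encList : List PreTree → ℕ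
    | [] => 0
    | t :: ts => Nat.pair (enc t) (encList ts) + 1
end

/- Canonical representative of the isomorphism class of a rooted tree:
recursively sort the children by their encoding. -/
mutual
  def canon : PreTree → PreTree
    | .node cs => .node ((canonList cs).mergeSort (fun a b => enc a ≤ enc b))
  def canonList : List PreTree → List PreTree
    | [] => []
    | t :: ts => canon t :: canonList ts
end

/-- The one-vertex rooted tree `•`. -/
def leaf : PreTree := .node []

/- The addresses (paths of child indices from the root) of all vertices. -/
mutual
  def positions : PreTree → List (List ℕ)
    | .node cs => [] :: positionsList 0 cs
  def positionsList : ℕ → List PreTree → List (List ℕ)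
    | _, [] => []
    | i, t :: ts => (positions t).map (fun p => i :: p) ++ positionsList (i + 1) ts
end

/- The addresses of all terminal vertices (vertices with no outgoing edge). -/
mutual
  def termPositions : PreTree → List (List ℕ)
    | .node [] => [[]]
    | .node (c :: cs) => termPositionsList 0 (c :: cs)
  def termPositionsList : ℕ → List PreTree → List (List ℕ)
    | _, [] => []
    | i, t :: ts => (termPositions t).map (fun p => i :: p) ++ termPositionsList (i + 1) ts
end

/- Attach a new terminal vertex by an edge to the vertex at address `p`. -/
mutual
  def addLeafAt : PreTree → List ℕ → PreTree
    | .node cs, [] => .node (cs ++ [leaf])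
    | .node cs, i :: p => .node (addLeafAtList cs i p)
  def addLeafAtList : List PreTree → ℕ → List ℕ → List PreTree
    | [], _, _ => []
    | t :: ts, 0, p => addLeafAt t p :: ts
    | t :: ts, i + 1, p => t :: addLeafAtList ts i p
end

/- Remove the (terminal) vertex at address `p` together with the edge into it. -/
mutual
  def removeAt : PreTree → List ℕ → PreTree
    | .node cs, [] => .node cs
    | .node cs, [i] => .node (cs.eraseIdx i)
    | .node cs, i :: p => .node (removeAtList cs i p)
  def removeAtList : List PreTree → ℕ → List ℕ → List PreTree
    | [], _, _ => []
    | t :: ts, 0, p => removeAt t p :: ts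
    | t :: ts, i + 1, p => t :: removeAtList ts i p
end

/-- For `s ↗ t` (and more generally any `s, t` with `size t = size s + 1`),
`ncoef s t` is `n(s,t)`: the number of vertices of `s` to which a new edge can
be added to obtain `t`. -/
def ncoef (s t : PreTree) : ℕ :=
  ((positions s).filter (fun p => canon (addLeafAt s p) = t)).length

/-- For `s ↗ t`, `mcoef s t` is `m(s,t)`: the number of edges of `t` (into a
terminal vertex) which when removed give `s`. -/
def mcoef (s t : PreTree) : ℕ :=
  ((termPositions t).filter (fun p => canon (removeAt t p) = s)).length

/-- The list of all (canonical representatives of) rooted unlabeled trees on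
`n` vertices: every tree on `n+1 ≥ 2` vertices is obtained by attaching a new
terminal vertex to a tree on `n` vertices. -/
def treeList : ℕ → List PreTree
  | 0 => []
  | 1 => [leaf]
  | n + 2 =>
      ((treeList (n + 1)).flatMap
        (fun t => (positions t).map (fun p => canon (addLeafAt t p)))).dedup

/-- The set `𝒯_n` of rooted unlabeled trees on `n` vertices. -/
def trees (n : ℕ) : Finset PreTree := (treeList n).toFinset

/-- `T_n = |𝒯_n|`, the number of rooted unlabeled trees on `n` vertices. -/
def T (n : ℕ) : ℕ := (trees n).card

/-- Generalized growth coefficients: `nGen k t t'` is the coefficient `n(t,t')`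
of `t'` in `G^k(t)` (for `size t' = size t + k`). -/
def nGen : ℕ → PreTree → PreTree → ℕ
  | 0, t, t' => if t = t' then 1 else 0
  | k + 1, t, t' => ((treeList (t.size + k)).map (fun s => nGen k t s * ncoef s t')).sum

/-- Generalized pruning coefficients: `mGen k t t'` is the coefficient `m(t,t')`
of `t` in `P^k(t')` (for `size t' = size t + k`). -/
def mGen : ℕ → PreTree → PreTree → ℕ
  | 0, t, t' => if t = t' then 1 else 0
  | k + 1, t, t' => ((treeList (t'.size - 1)).map (fun s => mcoef s t' * mGen k t s)).sum

/-- `m(t) = m(•,t)`, the number of ways to take `t` apart by sequentially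
removing terminal edges. -/
def mWt (t : PreTree) : ℕ := mGen (t.size - 1) leaf t

/-- `n(t) = n(•,t)`, the number of ways to build `t` up from `•`. -/
def nWt (t : PreTree) : ℕ := nGen (t.size - 1) leaf t

/-- The measure `π_n(t) = m(t) n(t) / ∏_{i=2}^n C(i,2)` on `𝒯_n`. -/
def piM (n : ℕ) (t : PreTree) : ℚ :=
  (mWt t * nWt t : ℚ) / ∏ i ∈ Finset.Icc 2 n, (Nat.choose i 2 : ℚ)

/-- Upward transition probability `P_u(s,t) = m(s,t) n(t) / (C(n,2) n(s))`
from `s ∈ 𝒯_{n-1}` to `t ∈ 𝒯_n`. -/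
def Pu (n : ℕ) (s t : PreTree) : ℚ :=
  (mcoef s t : ℚ) * (nWt t : ℚ) / ((Nat.choose n 2 : ℚ) * (nWt s : ℚ))

/-- Downward transition probability `P_d(t,s) = m(s,t) m(s) / m(t)`
from `t ∈ 𝒯_n` to `s ∈ 𝒯_{n-1}`. -/
def Pd (t s : PreTree) : ℚ :=
  (mcoef s t : ℚ) * (mWt s : ℚ) / (mWt t : ℚ)

/-- The down-up Markov chain on `𝒯_n`:
`K(t,t') = Σ_{s : s ↗ t, s ↗ t'} P_d(t,s) P_u(s,t')`.  (The sum may be taken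
over all `s ∈ 𝒯_{n-1}` since the summand vanishes unless `s ↗ t` and `s ↗ t'`.) -/
def K (n : ℕ) (t t' : PreTree) : ℚ :=
  ∑ s ∈ trees (n - 1), Pd t s * Pu n s t'

/-- `r`-step transition probabilities `K^r(t,t')` of the down-up chain. -/
def Kpow (n : ℕ) : ℕ → PreTree → PreTree → ℚ
  | 0, t, t' => if t = t' then 1 else 0
  | r + 1, t, t' => ∑ s ∈ trees n, K n t s * Kpow n r s t'

/-- The up-down Markov chain on `𝒯_n`:
`DU_n(t,t') = Σ_{s : s ⋗ t, s ⋗ t'} P_u(t,s) P_d(s,t')`. -/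
def DU (n : ℕ) (t t' : PreTree) : ℚ :=
  ∑ s ∈ trees (n + 1), Pu (n + 1) t s * Pd s t'

/-- `r`-step transition probabilities of the up-down chain. -/
def DUpow (n : ℕ) : ℕ → PreTree → PreTree → ℚ
  | 0, t, t' => if t = t' then 1 else 0
  | r + 1, t, t' => ∑ s ∈ trees n, DU n t s * DUpow n r s t'

/-- Maximal separation distance `s^*(r) = max_{t,t' ∈ 𝒯_n} [1 - K^r(t,t')/π_n(t')]`
of the down-up chain on `𝒯_n`. -/
noncomputable def sStar (n r : ℕ) : ℝ :=
  sSup {x : ℝ | ∃ t ∈ trees n, ∃ t' ∈ trees n,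
    x = 1 - (Kpow n r t t' : ℝ) / (piM n t' : ℝ)}

/-- Maximal separation distance of the up-down chain on `𝒯_n`. -/
noncomputable def sStarDU (n r : ℕ) : ℝ :=
  sSup {x : ℝ | ∃ t ∈ trees n, ∃ t' ∈ trees n,
    x = 1 - (DUpow n r t t' : ℝ) / (piM n t' : ℝ)}

/-- The path on `n` vertices (rooted at an end): the unique rooted tree on
`n ≥ 2` vertices with exactly one terminal vertex. -/
def pathTree : ℕ → PreTree
  | 0 => leaf
  | 1 => leaf
  | n + 2 => .node [pathTree (n + 1)]

/-- The star on `n` vertices (rooted at the center): the unique rooted tree on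
`n` vertices with `n-1` terminal vertices. -/
def starTree (n : ℕ) : PreTree := .node (List.replicate (n - 1) leaf)

/- The order of the symmetry group `SG(t) = ∏_{v ∈ t} SG(t,v)`, where for a
vertex `v` with children `v_1, …, v_k`, `SG(t,v)` is generated by the
permutations exchanging isomorphic subtrees rooted at the `v_i`. -/
mutual
  def sgOrder : PreTree → ℕ
    | .node cs => sgOrderList cs *
        ((canonList cs).dedup.map (fun c => Nat.factorial ((canonList cs).count c))).prod
  def sgOrderList : List PreTree → ℕ
    | [] => 1
    | t :: ts => sgOrder t * sgOrderList ts
end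

/- `hProd t = ∏_{v ∈ t} h(v)`, the product over all vertices `v` of `t` of the
number `h(v)` of vertices of the subtree rooted at `v`. -/
mutual
  def hProd : PreTree → ℕ
    | .node cs => size (.node cs) * hProdList cs
  def hProdList : List PreTree → ℕ
    | [] => 1
    | t :: ts => hProd t * hProdList ts
end

/-- The matrix entry of `G P : ℂ𝒯_n → ℂ𝒯_n`: the coefficient of `t'` in `G(P(t))`. -/
def gpEntry (n : ℕ) (t t' : PreTree) : ℕ :=
  ∑ s ∈ trees (n - 1), mcoef s t * ncoef s t'

/-- The matrix entry of `(G P)^l : ℂ𝒯_n → ℂ𝒯_n`: the coefficient of `t'` in `(GP)^l(t)`. -/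
def gpPow (n : ℕ) : ℕ → PreTree → PreTree → ℕ
  | 0, t, t' => if t = t' then 1 else 0
  | l + 1, t, t' => ∑ u ∈ trees n, gpPow n l t u * gpEntry n u t'

end PreTree

end RootedTreeChain

/-!
Removing terminal vertices one at a time, `m(t)` counts the orders in which a fixed tree can be
dismantled, and the hook-length recursion `∑_q ∏ h(t) / ∏ h(t - q) = |t|` over the terminal
vertices `q` gives `m(t) ∏_v h(v) = |t|!`. Comparing the multisets of children at the root, `t`
arises from `s` either by a new leaf at the root or by growing a single child `a` into `b`; by
induction on that child this yields the exchange relation `m(s,t) |SG(s)| = n(s,t) |SG(t)|`, hence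
`n(t) |SG(t)| = m(t)`. With `∏_{i=2}^n C(i,2) 2^(n-1) = n! (n-1)!` the formula follows.
-/

namespace List

variable {α : Type*}

@[to_additive]
theorem prod_map_set_mul_getElem {M : Type*} [CommMonoid M] (f : α → M) {l : List α} {j : ℕ}
    (hj : j < l.length) (y : α) :
    ((l.set j y).map f).prod * f l[j] = (l.map f).prod * f y := by
  rw [((set_perm_cons_eraseIdx hj y).map f).prod_eq,
    ← ((getElem_cons_eraseIdx_perm hj).map f).prod_eq]
  simp only [map_cons, prod_cons]
  ac_rfl

@[to_additive]
theorem prod_map_eraseIdx_mul_getElem {M : Type*} [CommMonoid M] (f : α → M) {l : List α}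
    {j : ℕ} (hj : j < l.length) :
    ((l.eraseIdx j).map f).prod * f l[j] = (l.map f).prod := by
  rw [← ((getElem_cons_eraseIdx_perm hj).map f).prod_eq, map_cons, prod_cons, mul_comm]

theorem coe_set_eq_iff {l : List α} {j : ℕ} (hj : j < l.length) {y : α} {M : Multiset α} :
    (l.set j y : Multiset α) = M ↔ l[j] ::ₘ M = y ::ₘ (l : Multiset α) := by
  rw [Multiset.coe_eq_coe.mpr (set_perm_cons_eraseIdx hj y),
    ← Multiset.coe_eq_coe.mpr (getElem_cons_eraseIdx_perm hj)]
  simp only [← Multiset.cons_coe]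
  rw [Multiset.cons_swap, Multiset.cons_inj_right, eq_comm]

theorem coe_eraseIdx_eq_iff {l : List α} {j : ℕ} (hj : j < l.length) {M : Multiset α} :
    (l.eraseIdx j : Multiset α) = M ↔ (l : Multiset α) = l[j] ::ₘ M := by
  rw [← Multiset.coe_eq_coe.mpr (getElem_cons_eraseIdx_perm hj)]
  simp only [← Multiset.cons_coe]
  rw [Multiset.cons_inj_right]

theorem sum_map_zipIdx_fst {M : Type*} [AddMonoid M] (f : α → M) (l : List α) (n : ℕ) :
    ((l.zipIdx n).map fun x => f x.1).sum = (l.map f).sum := by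
  conv_rhs => rw [← zipIdx_map_fst n l, map_map]
  rfl

theorem sum_map_length_filter_smul {ι β M : Type*} [DecidableEq β] [AddCommMonoid M]
    (g : ι → β) (f : β → M) {S : List β} (hS : S.Nodup) :
    ∀ {L : List ι}, (∀ x ∈ L, g x ∈ S) →
      (S.map fun s => (L.filter fun x => g x = s).length • f s).sum = (L.map (f ∘ g)).sum
  | [], _ => by simp
  | x :: L, hL => by
    have hx : (S.map fun s => (if g x = s then 1 else 0) • f s).sum = f (g x) := by
      rw [sum_map_eq_nsmul_single (g x) _ fun s hs _ => by simp [Ne.symm hs],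
        count_eq_one_of_mem hS (hL x mem_cons_self)]
      simp
    have hsplit : ∀ s, ((x :: L).filter fun y => g y = s).length • f s =
        (if g x = s then 1 else 0) • f s + (L.filter fun y => g y = s).length • f s := by
      intro s
      by_cases h : g x = s <;> simp [h, add_smul, add_comm]
    rw [map_congr_left fun s _ => hsplit s, sum_map_add, hx,
      sum_map_length_filter_smul g f hS fun y hy => hL y (mem_cons_of_mem x hy), map_cons,
      sum_cons, Function.comp_apply]

end List

namespace Multiset

variable {α : Type*}

theorem cons_eq_cons_iff_of_cons_eq {a b c d : α} {S T : Multiset α} (h : a ::ₘ T = b ::ₘ S)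
    (hab : a ≠ b) : c ::ₘ T = d ::ₘ S ↔ c = a ∧ d = b := by
  refine ⟨fun h' => ?_, fun ⟨hc, hd⟩ => hc ▸ hd ▸ h⟩
  have hpair : (c ::ₘ {b}) + S = (a ::ₘ {d}) + S := by
    simp only [cons_add, singleton_add]
    rw [← h, cons_swap, h', cons_swap]
  rw [add_left_inj, cons_eq_cons] at hpair
  rcases hpair with ⟨hca, hbd⟩ | ⟨-, M, hb, -⟩
  · exact ⟨hca, (singleton_inj.mp hbd).symm⟩
  · have ha : a ∈ ({b} : Multiset α) := by rw [hb]; exact mem_cons_self a M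
    exact absurd (mem_singleton.mp ha) hab

theorem mem_of_cons_eq_cons {a b : α} {S T : Multiset α} (h : a ::ₘ T = b ::ₘ S)
    (hab : a ≠ b) : b ∈ T ∧ a ∈ S :=
  ⟨(mem_cons.mp (h ▸ mem_cons_self b S)).resolve_left (Ne.symm hab),
    (mem_cons.mp (h.symm ▸ mem_cons_self a T)).resolve_left hab⟩

theorem cons_cons_ne_cons (a b c : α) (S : Multiset α) : a ::ₘ b ::ₘ S ≠ c ::ₘ S :=
  fun h => by simpa using congrArg card h

theorem prod_factorial_count_cons [DecidableEq α] (a : α) (M : Multiset α) :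
    ∏ x ∈ (a ::ₘ M).toFinset, ((a ::ₘ M).count x).factorial =
      (M.count a + 1) * ∏ x ∈ M.toFinset, (M.count x).factorial := by
  have hcount : ∀ x, ((a ::ₘ M).count x).factorial =
      (if x = a then M.count a + 1 else 1) * (M.count x).factorial := by
    intro x
    rw [count_cons]
    split_ifs with hx
    · rw [hx, Nat.factorial_succ]
    · simp
  rw [Finset.prod_congr rfl fun x _ => hcount x, Finset.prod_mul_distrib,
    Finset.prod_ite_eq' _ _ _, if_pos (by simp)]
  congr 1
  refine (Finset.prod_subset (toFinset_subset.mpr (subset_cons M a)) fun x _ hx => ?_).symm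
  rw [count_eq_zero.mpr (by simpa using hx), Nat.factorial_zero]

end Multiset

namespace Nat

theorem prod_Icc_choose_two_mul_two_pow (m : ℕ) :
    (∏ i ∈ Finset.Icc 2 (m + 1), i.choose 2) * 2 ^ m = (m + 1).factorial * m.factorial := by
  induction m with
  | zero => simp
  | succ m ih =>
    rw [Finset.prod_Icc_succ_top (by omega), pow_succ, Nat.factorial_succ (m + 1)]
    have hchoose : (m + 2).choose 2 * 2 = (m + 2) * (m + 1) := by
      rw [Nat.choose_two_right, Nat.div_mul_cancel (Nat.even_mul_pred_self (m + 2)).two_dvd]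
      rfl
    linear_combination ((m + 2).choose 2 * 2) * ih + (m + 1).factorial * m.factorial * hchoose -
      (m + 2) * (m + 1).factorial * Nat.factorial_succ m

end Nat

namespace RootedTreeChain

namespace PreTree

@[elab_as_elim]
theorem inductionOn {P : PreTree → Prop} (t : PreTree)
    (node : ∀ cs, (∀ c ∈ cs, P c) → P (node cs)) : P t :=
  match t with
  | .node cs => node cs fun c _ => inductionOn c node
decreasing_by
  have := List.sizeOf_lt_of_mem ‹c ∈ cs›
  simp only [PreTree.node.sizeOf_spec]
  omega

@[simp] theorem sizeList_eq_sum (cs : List PreTree) : sizeList cs = (cs.map size).sum := by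
  induction cs with
  | nil => rw [sizeList]; rfl
  | cons c cs ih => rw [sizeList, ih]; rfl

@[simp] theorem size_node (cs : List PreTree) : size (node cs) = 1 + sizeList cs := by
  rw [size]

@[simp] theorem hProdList_eq_prod (cs : List PreTree) : hProdList cs = (cs.map hProd).prod := by
  induction cs with
  | nil => rw [hProdList]; rfl
  | cons c cs ih => rw [hProdList, ih]; rfl

@[simp] theorem hProd_node (cs : List PreTree) :
    hProd (node cs) = size (node cs) * hProdList cs := by
  rw [hProd]

@[simp] theorem sgOrderList_eq_prod (cs : List PreTree) :
    sgOrderList cs = (cs.map sgOrder).prod := by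
  induction cs with
  | nil => rw [sgOrderList]; rfl
  | cons c cs ih => rw [sgOrderList, ih]; rfl

@[simp] theorem canonList_eq_map (cs : List PreTree) : canonList cs = cs.map canon := by
  induction cs with
  | nil => rw [canonList]; rfl
  | cons c cs ih => rw [canonList, ih]; rfl

theorem leaf_eq : leaf = node [] := rfl

@[simp] theorem size_leaf : size leaf = 1 := by simp [leaf_eq]

@[simp] theorem hProd_leaf : hProd leaf = 1 := by simp [leaf_eq]

theorem size_pos (t : PreTree) : 0 < size t := by
  cases t
  simp

theorem two_le_size_of_ne_leaf {t : PreTree} (h : t ≠ leaf) : 2 ≤ size t := by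
  obtain ⟨_ | ⟨c, cs⟩⟩ := t
  · exact absurd rfl h
  · have := size_pos c
    simp only [size_node, sizeList_eq_sum, List.map_cons, List.sum_cons]
    omega

theorem size_le_sizeList {c : PreTree} {cs : List PreTree} (h : c ∈ cs) :
    size c ≤ sizeList cs := by
  rw [sizeList_eq_sum]
  exact List.le_sum_of_mem (List.mem_map_of_mem h)

theorem hProd_pos (t : PreTree) : 0 < hProd t := by
  induction t using inductionOn with
  | node cs ih =>
    simp only [hProd_node, hProdList_eq_prod]
    exact Nat.mul_pos (size_pos _) (List.prod_pos (by simpa using ih))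

theorem sgOrder_pos (t : PreTree) : 0 < sgOrder t := by
  induction t using inductionOn with
  | node cs ih =>
    rw [sgOrder, sgOrderList_eq_prod]
    exact Nat.mul_pos (List.prod_pos (by simpa using ih))
      (List.prod_pos (by simp [Nat.factorial_pos]))

/-! ### Canonical representatives -/

theorem enc_injective : Function.Injective enc := by
  intro t
  induction t using inductionOn with
  | node cs ih =>
    rintro ⟨ds⟩ h
    rw [enc, enc] at h
    suffices cs = ds by rw [this]
    induction cs generalizing ds with
    | nil => cases ds <;> simp_all [encList]
    | cons c cs ihcs =>
      cases ds with
      | nil => simp [encList] at h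
      | cons d ds =>
        simp only [encList, add_left_inj, Nat.pair_eq_pair] at h
        rw [ih c (by simp) h.1, ihcs (fun x hx => ih x (by simp [hx])) ds h.2]

def encLe (a b : PreTree) : Bool := enc a ≤ enc b

theorem canon_node (cs : List PreTree) :
    canon (node cs) = node ((cs.map canon).mergeSort encLe) := by
  rw [canon, canonList_eq_map]
  rfl

theorem mergeSort_encLe_eq_iff {l₁ l₂ : List PreTree} :
    l₁.mergeSort encLe = l₂.mergeSort encLe ↔ l₁.Perm l₂ := by
  have hsorted (l : List PreTree) : (l.mergeSort encLe).Pairwise fun a b => encLe a b :=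
    List.pairwise_mergeSort (by simp only [encLe, decide_eq_true_eq]; omega)
      (by simp only [encLe, Bool.or_eq_true, decide_eq_true_eq]; omega) l
  refine ⟨fun h => ?_, fun h => ?_⟩
  · exact (List.mergeSort_perm l₁ _).symm.trans (h ▸ List.mergeSort_perm l₂ _)
  · have hperm := ((List.mergeSort_perm l₁ encLe).trans h).trans
      (List.mergeSort_perm l₂ encLe).symm
    refine List.Perm.eq_of_pairwise (fun a b _ _ hab hba => enc_injective ?_) (hsorted l₁)
      (hsorted l₂) hperm
    simp only [encLe, decide_eq_true_eq] at hab hba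
    omega

theorem canon_node_eq_canon_node_iff {cs ds : List PreTree} :
    canon (node cs) = canon (node ds) ↔ (cs.map canon).Perm (ds.map canon) := by
  rw [canon_node, canon_node, node.injEq, mergeSort_encLe_eq_iff]

theorem canon_canon (t : PreTree) : canon (canon t) = canon t := by
  induction t using inductionOn with
  | node cs ih =>
    conv_lhs => arg 1; rw [canon_node]
    rw [canon_node_eq_canon_node_iff]
    refine ((List.mergeSort_perm _ _).map canon).trans ?_
    rw [List.map_map]
    exact .of_eq (List.map_congr_left ih)

def IsCanon (t : PreTree) : Prop := canon t = t

theorem isCanon_canon (t : PreTree) : IsCanon (canon t) := canon_canon t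

theorem isCanon_leaf : IsCanon leaf := by
  simp [IsCanon, leaf_eq, canon_node]

@[simp] theorem canon_leaf : canon leaf = leaf := isCanon_leaf

theorem IsCanon.of_mem {cs : List PreTree} (h : IsCanon (node cs)) {c : PreTree} (hc : c ∈ cs) :
    IsCanon c := by
  rw [IsCanon, canon_node, node.injEq] at h
  rw [← h, List.mem_mergeSort, List.mem_map] at hc
  obtain ⟨a, -, rfl⟩ := hc
  exact isCanon_canon a

theorem map_canon_eq_self {cs : List PreTree} (h : ∀ c ∈ cs, IsCanon c) : cs.map canon = cs :=
  (List.map_congr_left h).trans (List.map_id cs)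

theorem canon_node_eq_iff {cs ts : List PreTree} (ht : IsCanon (node ts)) :
    canon (node cs) = node ts ↔ ((cs.map canon : List PreTree) : Multiset PreTree) = ts := by
  conv_lhs => rw [← show canon (node ts) = node ts from ht]
  rw [canon_node_eq_canon_node_iff, map_canon_eq_self fun _ => ht.of_mem, Multiset.coe_eq_coe]

theorem size_canon (t : PreTree) : size (canon t) = size t := by
  induction t using inductionOn with
  | node cs ih =>
    rw [canon_node, size_node, size_node, sizeList_eq_sum, sizeList_eq_sum,
      ((List.mergeSort_perm _ _).map size).sum_eq, List.map_map]
    exact congrArg (1 + List.sum ·) (List.map_congr_left ih)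

theorem hProd_canon (t : PreTree) : hProd (canon t) = hProd t := by
  induction t using inductionOn with
  | node cs ih =>
    rw [canon_node, hProd_node, hProd_node, ← canon_node, size_canon, hProdList_eq_prod,
      hProdList_eq_prod, ((List.mergeSort_perm _ _).map hProd).prod_eq, List.map_map]
    exact congrArg (size (node cs) * List.prod ·) (List.map_congr_left ih)

def sgOrderOfChildren (M : Multiset PreTree) : ℕ :=
  (M.map sgOrder).prod * ∏ x ∈ M.toFinset, (M.count x).factorial

theorem sgOrder_node_of_isCanon {cs : List PreTree} (h : IsCanon (node cs)) :
    sgOrder (node cs) = sgOrderOfChildren cs := by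
  rw [sgOrder, canonList_eq_map, map_canon_eq_self fun _ => h.of_mem, sgOrderList_eq_prod,
    sgOrderOfChildren, Multiset.map_coe, Multiset.prod_coe, List.toFinset_coe,
    show cs.toFinset = cs.dedup.toFinset by ext; simp, List.prod_toFinset _ (List.nodup_dedup cs)]
  simp only [Multiset.coe_count]

theorem sgOrderOfChildren_cons (a : PreTree) (M : Multiset PreTree) :
    sgOrderOfChildren (a ::ₘ M) = (M.count a + 1) * sgOrder a * sgOrderOfChildren M := by
  rw [sgOrderOfChildren, sgOrderOfChildren, Multiset.prod_factorial_count_cons, Multiset.map_cons,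
    Multiset.prod_cons]
  ring

@[simp] theorem sgOrder_leaf : sgOrder leaf = 1 := by
  rw [leaf_eq, sgOrder_node_of_isCanon isCanon_leaf]
  simp [sgOrderOfChildren]

/-! ### Addresses of vertices -/

theorem positions_node (cs : List PreTree) :
    positions (node cs) = [] :: cs.zipIdx.flatMap fun x => (positions x.1).map (x.2 :: ·) := by
  suffices ∀ i, positionsList i cs =
      (cs.zipIdx i).flatMap fun x => (positions x.1).map (x.2 :: ·) by
    rw [positions, this]
  induction cs with
  | nil => intro i; rw [positionsList]; rfl
  | cons c cs ih => intro i; rw [positionsList, ih, List.zipIdx_cons, List.flatMap_cons]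

theorem termPositions_node {cs : List PreTree} (hcs : cs ≠ []) :
    termPositions (node cs) = cs.zipIdx.flatMap fun x => (termPositions x.1).map (x.2 :: ·) := by
  suffices ∀ i, termPositionsList i cs =
      (cs.zipIdx i).flatMap fun x => (termPositions x.1).map (x.2 :: ·) by
    obtain ⟨c, cs, rfl⟩ := List.exists_cons_of_ne_nil hcs
    rw [termPositions, this]
  clear hcs
  induction cs with
  | nil => intro i; rw [termPositionsList]; rfl
  | cons c cs ih => intro i; rw [termPositionsList, ih, List.zipIdx_cons, List.flatMap_cons]

@[simp] theorem termPositions_leaf : termPositions leaf = [[]] := by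
  rw [leaf_eq, termPositions]

theorem termPositions_ne_nil (t : PreTree) : termPositions t ≠ [] := by
  induction t using inductionOn with
  | node cs ih =>
    obtain _ | ⟨c, cs'⟩ := cs
    · simp [← leaf_eq]
    · rw [termPositions_node (List.cons_ne_nil c cs'), List.zipIdx_cons, List.flatMap_cons]
      intro h
      exact ih c List.mem_cons_self (List.map_eq_nil_iff.mp (List.append_eq_nil_iff.mp h).1)

theorem nil_mem_termPositions {t : PreTree} : [] ∈ termPositions t ↔ t = leaf := by
  obtain ⟨_ | ⟨c, cs⟩⟩ := t
  · simp [← leaf_eq]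
  · rw [termPositions_node (List.cons_ne_nil c cs)]
    simp [leaf_eq]

theorem addLeafAt_node_nil (cs : List PreTree) : addLeafAt (node cs) [] = node (cs ++ [leaf]) := by
  rw [addLeafAt]

theorem addLeafAt_node_cons {cs : List PreTree} {j : ℕ} (hj : j < cs.length) (p : List ℕ) :
    addLeafAt (node cs) (j :: p) = node (cs.set j (addLeafAt cs[j] p)) := by
  rw [addLeafAt, node.injEq]
  induction cs generalizing j with
  | nil => simp at hj
  | cons c cs ih =>
    cases j with
    | zero => rw [addLeafAtList]; rfl
    | succ j => rw [addLeafAtList, ih (by simpa using hj)]; rfl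

theorem removeAt_node_nil (cs : List PreTree) : removeAt (node cs) [] = node cs := by
  rw [removeAt]

@[simp] theorem removeAt_leaf_nil : removeAt leaf [] = leaf := removeAt_node_nil []

theorem removeAt_node_singleton (cs : List PreTree) (j : ℕ) :
    removeAt (node cs) [j] = node (cs.eraseIdx j) := by
  rw [removeAt]

theorem removeAt_node_cons {cs : List PreTree} {j : ℕ} (hj : j < cs.length) {q : List ℕ}
    (hq : q ≠ []) : removeAt (node cs) (j :: q) = node (cs.set j (removeAt cs[j] q)) := by
  obtain ⟨i, q, rfl⟩ := List.exists_cons_of_ne_nil hq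
  rw [removeAt, node.injEq]
  swap
  · simp
  induction cs generalizing j with
  | nil => simp at hj
  | cons c cs ih =>
    cases j with
    | zero => rw [removeAtList]; rfl
    | succ j => rw [removeAtList, ih (by simpa using hj)]; rfl

theorem size_addLeafAt {t : PreTree} {p : List ℕ} (hp : p ∈ positions t) :
    size (addLeafAt t p) = size t + 1 := by
  induction t using inductionOn generalizing p with
  | node cs ih =>
    simp only [positions_node, List.mem_cons, List.mem_flatMap, List.mem_map] at hp
    rcases hp with rfl | ⟨⟨c, j⟩, hx, p, hp, rfl⟩
    · simp [addLeafAt_node_nil]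
      omega
    · obtain ⟨hj, hc⟩ := List.mem_zipIdx' hx
      have := List.sum_map_set_add_getElem size hj (addLeafAt c p)
      rw [← hc, ih c (List.fst_mem_of_mem_zipIdx hx) hp] at this
      rw [addLeafAt_node_cons hj, ← hc, size_node, size_node, sizeList_eq_sum, sizeList_eq_sum]
      omega

theorem size_removeAt {t : PreTree} {q : List ℕ} (hq : q ∈ termPositions t) (ht : t ≠ leaf) :
    size (removeAt t q) + 1 = size t := by
  induction t using inductionOn generalizing q with
  | node cs ih =>
    have hcs : cs ≠ [] := by rintro rfl; exact ht rfl
    simp only [termPositions_node hcs, List.mem_flatMap, List.mem_map] at hq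
    obtain ⟨⟨c, j⟩, hx, q, hq, rfl⟩ := hq
    obtain ⟨hj, hc⟩ := List.mem_zipIdx' hx
    dsimp only at hq ⊢
    by_cases hleaf : c = leaf
    · subst hleaf
      obtain rfl : q = [] := by simpa using hq
      have := List.sum_map_eraseIdx_add_getElem size hj
      rw [← hc, size_leaf] at this
      rw [removeAt_node_singleton, size_node, size_node, sizeList_eq_sum, sizeList_eq_sum]
      omega
    · have hq' : q ≠ [] := by rintro rfl; exact hleaf (nil_mem_termPositions.mp hq)
      have := List.sum_map_set_add_getElem size hj (removeAt c q)
      rw [← hc] at this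
      have := ih c (List.fst_mem_of_mem_zipIdx hx) hq hleaf
      rw [removeAt_node_cons hj hq', ← hc, size_node, size_node, sizeList_eq_sum, sizeList_eq_sum]
      omega

/-! ### Growth and pruning at the root -/

-- `c ::ₘ T = c' ::ₘ S` says that `T` is `S` with one copy of `c` replaced by `c'`.
theorem ncoef_node {ss ts : List PreTree} (hs : IsCanon (node ss)) (ht : IsCanon (node ts)) :
    ncoef (node ss) (node ts) =
      (if (ts : Multiset PreTree) = leaf ::ₘ ss then 1 else 0) +
      (ss.map fun c => (positions c).countP fun p =>
        c ::ₘ (ts : Multiset PreTree) = canon (addLeafAt c p) ::ₘ ss).sum := by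
  rw [ncoef, ← List.countP_eq_length_filter, positions_node, List.countP_cons,
    List.countP_flatMap, add_comm, ← List.sum_map_zipIdx_fst _ ss 0]
  congr 1
  · have hroot : ((ss ++ [leaf] : List PreTree) : Multiset PreTree) = leaf ::ₘ ss :=
      Multiset.coe_eq_coe.mpr (List.perm_append_singleton leaf ss)
    simp only [addLeafAt_node_nil, decide_eq_true_eq, canon_node_eq_iff ht, List.map_append,
      map_canon_eq_self fun _ => hs.of_mem, List.map_singleton, canon_leaf, hroot,
      eq_comm (a := leaf ::ₘ (ss : Multiset PreTree))]
  · congr 1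
    refine List.map_congr_left fun ⟨c, j⟩ hx => ?_
    obtain ⟨hj, hc⟩ := List.mem_zipIdx' hx
    simp only [Function.comp_apply, List.countP_map]
    refine List.countP_congr fun p _ => ?_
    simp only [Function.comp_apply, decide_eq_true_eq, addLeafAt_node_cons hj,
      canon_node_eq_iff ht, List.map_set, map_canon_eq_self fun _ => hs.of_mem,
      List.coe_set_eq_iff hj, ← hc]

theorem mcoef_node {ss ts : List PreTree} (hs : IsCanon (node ss)) (ht : IsCanon (node ts))
    (hts : ts ≠ []) :
    mcoef (node ss) (node ts) =
      (ts.map fun c => if c = leaf then (if (ts : Multiset PreTree) = leaf ::ₘ ss then 1 else 0)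
        else (termPositions c).countP fun q =>
          c ::ₘ (ss : Multiset PreTree) = canon (removeAt c q) ::ₘ ts).sum := by
  rw [mcoef, ← List.countP_eq_length_filter, termPositions_node hts, List.countP_flatMap,
    ← List.sum_map_zipIdx_fst _ ts 0]
  congr 1
  refine List.map_congr_left fun ⟨c, j⟩ hx => ?_
  obtain ⟨hj, hc⟩ := List.mem_zipIdx' hx
  simp only [Function.comp_apply, List.countP_map]
  by_cases hleaf : c = leaf
  · subst hleaf
    rw [if_pos rfl]
    have hcanon : (ts.eraseIdx j).map canon = ts.eraseIdx j :=
      map_canon_eq_self fun _ hx => ht.of_mem (List.mem_of_mem_eraseIdx hx)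
    simp only [termPositions_leaf, List.countP_singleton, Function.comp_apply,
      removeAt_node_singleton, decide_eq_true_eq, canon_node_eq_iff hs, hcanon,
      List.coe_eraseIdx_eq_iff hj, ← hc]
  · rw [if_neg hleaf]
    refine List.countP_congr fun q hq => ?_
    have hq' : q ≠ [] := by rintro rfl; exact hleaf (nil_mem_termPositions.mp hq)
    simp only [Function.comp_apply, decide_eq_true_eq, removeAt_node_cons hj hq',
      canon_node_eq_iff hs, List.map_set, map_canon_eq_self fun _ => ht.of_mem,
      List.coe_set_eq_iff hj, ← hc]

theorem ncoef_node_of_eq_leaf_cons {ss ts : List PreTree} (hs : IsCanon (node ss))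
    (ht : IsCanon (node ts)) (hR : (ts : Multiset PreTree) = leaf ::ₘ ss) :
    ncoef (node ss) (node ts) = 1 := by
  rw [ncoef_node hs ht, if_pos hR, add_eq_left, List.sum_eq_zero]
  intro n hn
  obtain ⟨c, -, rfl⟩ := List.mem_map.mp hn
  refine List.countP_eq_zero.mpr fun p _ h => ?_
  rw [hR, decide_eq_true_eq] at h
  exact Multiset.cons_cons_ne_cons _ _ _ _ h

theorem mcoef_node_of_eq_leaf_cons {ss ts : List PreTree} (hs : IsCanon (node ss))
    (ht : IsCanon (node ts)) (hR : (ts : Multiset PreTree) = leaf ::ₘ ss) :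
    mcoef (node ss) (node ts) = ts.count leaf := by
  have hts : ts ≠ [] := by rintro rfl; exact Multiset.cons_ne_zero hR.symm
  rw [mcoef_node hs ht hts, List.sum_map_eq_nsmul_single leaf, if_pos rfl, if_pos hR, smul_eq_mul,
    mul_one]
  intro c hc _
  rw [if_neg hc, List.countP_eq_zero]
  intro q _ h
  rw [hR, decide_eq_true_eq] at h
  exact Multiset.cons_cons_ne_cons _ _ _ _ h.symm

theorem ncoef_node_of_cons_eq {ss ts : List PreTree} (hs : IsCanon (node ss))
    (ht : IsCanon (node ts)) {a b : PreTree} (hC : a ::ₘ (ts : Multiset PreTree) = b ::ₘ ss)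
    (hab : a ≠ b) : ncoef (node ss) (node ts) = ss.count a * ncoef a b := by
  have hR : ¬ (ts : Multiset PreTree) = leaf ::ₘ ss := fun hR =>
    Multiset.cons_cons_ne_cons _ _ _ _ (hR ▸ hC)
  rw [ncoef_node hs ht, if_neg hR, zero_add, List.sum_map_eq_nsmul_single a, smul_eq_mul, ncoef,
    ← List.countP_eq_length_filter]
  · simp only [Multiset.cons_eq_cons_iff_of_cons_eq hC hab, true_and]
  · intro c hc _
    refine List.countP_eq_zero.mpr fun p _ h => hc ?_
    rw [decide_eq_true_eq, Multiset.cons_eq_cons_iff_of_cons_eq hC hab] at h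
    exact h.1

theorem mcoef_node_of_cons_eq {ss ts : List PreTree} (hs : IsCanon (node ss))
    (ht : IsCanon (node ts)) {a b : PreTree} (hC : a ::ₘ (ts : Multiset PreTree) = b ::ₘ ss)
    (hab : a ≠ b) (hb : b ≠ leaf) : mcoef (node ss) (node ts) = ts.count b * mcoef a b := by
  have hR : ¬ (ts : Multiset PreTree) = leaf ::ₘ ss := fun hR =>
    Multiset.cons_cons_ne_cons _ _ _ _ (hR ▸ hC)
  have hts : ts ≠ [] := List.ne_nil_of_mem (Multiset.mem_of_cons_eq_cons hC hab).1
  rw [mcoef_node hs ht hts, List.sum_map_eq_nsmul_single b, if_neg hb, smul_eq_mul, mcoef,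
    ← List.countP_eq_length_filter]
  · simp only [Multiset.cons_eq_cons_iff_of_cons_eq hC.symm hab.symm, true_and]
  · intro c hc _
    split_ifs
    · rfl
    · refine List.countP_eq_zero.mpr fun q _ h => hc ?_
      rw [decide_eq_true_eq, Multiset.cons_eq_cons_iff_of_cons_eq hC.symm hab.symm] at h
      exact h.1

theorem ncoef_node_eq_zero {ss ts : List PreTree} (hs : IsCanon (node ss))
    (ht : IsCanon (node ts)) (hR : ¬ (ts : Multiset PreTree) = leaf ::ₘ ss)
    (hC : ∀ a b, a ::ₘ (ts : Multiset PreTree) = b ::ₘ ss → size b ≠ size a + 1) :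
    ncoef (node ss) (node ts) = 0 := by
  rw [ncoef_node hs ht, if_neg hR, zero_add, List.sum_eq_zero]
  intro n hn
  obtain ⟨c, -, rfl⟩ := List.mem_map.mp hn
  refine List.countP_eq_zero.mpr fun p hp h => ?_
  rw [decide_eq_true_eq] at h
  exact hC _ _ h (by rw [size_canon, size_addLeafAt hp])

theorem mcoef_node_eq_zero {ss ts : List PreTree} (hs : IsCanon (node ss))
    (ht : IsCanon (node ts)) (hts : ts ≠ []) (hR : ¬ (ts : Multiset PreTree) = leaf ::ₘ ss)
    (hC : ∀ a b, a ::ₘ (ts : Multiset PreTree) = b ::ₘ ss → size b ≠ size a + 1) :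
    mcoef (node ss) (node ts) = 0 := by
  rw [mcoef_node hs ht hts, List.sum_eq_zero]
  intro n hn
  obtain ⟨c, -, rfl⟩ := List.mem_map.mp hn
  split_ifs with hleaf
  · rfl
  refine List.countP_eq_zero.mpr fun q hq h => ?_
  rw [decide_eq_true_eq] at h
  exact hC _ _ h.symm (by rw [size_canon, size_removeAt hq hleaf])

theorem mcoef_mul_sgOrder_node_of_cons_eq {ss ts : List PreTree} (hs : IsCanon (node ss))
    (ht : IsCanon (node ts)) {a b : PreTree} (hC : a ::ₘ (ts : Multiset PreTree) = b ::ₘ ss)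
    (hab : a ≠ b) (hb : b ≠ leaf) (hchild : mcoef a b * sgOrder a = ncoef a b * sgOrder b) :
    mcoef (node ss) (node ts) * sgOrder (node ss) =
      ncoef (node ss) (node ts) * sgOrder (node ts) := by
  obtain ⟨R, hS⟩ := Multiset.exists_cons_of_mem (Multiset.mem_of_cons_eq_cons hC hab).2
  have hT : (ts : Multiset PreTree) = b ::ₘ R :=
    (Multiset.cons_inj_right a).mp (by rw [hC, hS, Multiset.cons_swap])
  rw [mcoef_node_of_cons_eq hs ht hC hab hb, ncoef_node_of_cons_eq hs ht hC hab,
    sgOrder_node_of_isCanon hs, sgOrder_node_of_isCanon ht, ← Multiset.coe_count,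
    ← Multiset.coe_count, hS, hT, sgOrderOfChildren_cons, sgOrderOfChildren_cons,
    Multiset.count_cons_self, Multiset.count_cons_self]
  linear_combination ((R.count a + 1) * (R.count b + 1) * sgOrderOfChildren R) * hchild

theorem mcoef_mul_sgOrder {s t : PreTree} (hs : IsCanon s) (ht : IsCanon t)
    (hsize : size t = size s + 1) : mcoef s t * sgOrder s = ncoef s t * sgOrder t := by
  induction t using inductionOn generalizing s with
  | node ts ih =>
  obtain ⟨ss⟩ := s
  by_cases hC : ∃ a b, a ::ₘ (ts : Multiset PreTree) = b ::ₘ ss ∧ size b = size a + 1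
  · obtain ⟨a, b, hC, hsab⟩ := hC
    have hab : a ≠ b := by rintro rfl; omega
    have hb : b ≠ leaf := by rintro rfl; have := size_pos a; simp at hsab; omega
    obtain ⟨hbT, haS⟩ := Multiset.mem_of_cons_eq_cons hC hab
    exact mcoef_mul_sgOrder_node_of_cons_eq hs ht hC hab hb
      (ih b hbT (hs.of_mem haS) (ht.of_mem hbT) hsab)
  push Not at hC
  by_cases hR : (ts : Multiset PreTree) = leaf ::ₘ ss
  · rw [ncoef_node_of_eq_leaf_cons hs ht hR, mcoef_node_of_eq_leaf_cons hs ht hR,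
      sgOrder_node_of_isCanon hs, sgOrder_node_of_isCanon ht, ← Multiset.coe_count, hR,
      sgOrderOfChildren_cons, Multiset.count_cons_self, sgOrder_leaf, Multiset.coe_count]
    ring
  · have hts : ts ≠ [] := by rintro rfl; simp at hsize
    rw [ncoef_node_eq_zero hs ht hR hC, mcoef_node_eq_zero hs ht hts hR hC, zero_mul, zero_mul]

/-! ### Hook lengths -/

theorem hProd_removeAt_node_mul {ts : List PreTree} {c : PreTree} {j : ℕ}
    (hx : (c, j) ∈ ts.zipIdx) {q : List ℕ} (hq : q ∈ termPositions c) :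
    hProd (removeAt (node ts) (j :: q)) * size (node ts) * hProd c =
      hProd (node ts) * sizeList ts * hProd (removeAt c q) := by
  obtain ⟨hj, hc⟩ := List.mem_zipIdx' hx
  by_cases hleaf : c = leaf
  · subst hleaf
    obtain rfl : q = [] := by simpa using hq
    have hsize := List.sum_map_eraseIdx_add_getElem size hj
    have hprod := List.prod_map_eraseIdx_mul_getElem hProd hj
    rw [← hc, size_leaf] at hsize
    rw [← hc, hProd_leaf, mul_one] at hprod
    rw [removeAt_node_singleton, removeAt_leaf_nil]
    simp only [hProd_node, size_node, sizeList_eq_sum, hProdList_eq_prod, hProd_leaf, ← hsize,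
      ← hprod]
    ring
  · have hq' : q ≠ [] := by rintro rfl; exact hleaf (nil_mem_termPositions.mp hq)
    have hsize := List.sum_map_set_add_getElem size hj (removeAt c q)
    have hprod := List.prod_map_set_mul_getElem hProd hj (removeAt c q)
    have hc' := size_removeAt hq hleaf
    rw [← hc] at hsize hprod
    have hS : ((ts.set j (removeAt c q)).map size).sum + 1 = (ts.map size).sum := by omega
    rw [removeAt_node_cons hj hq', ← hc]
    simp only [hProd_node, size_node, sizeList_eq_sum, hProdList_eq_prod, ← hS]
    linear_combination (((ts.set j (removeAt c q)).map size).sum + 2) *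
      (((ts.set j (removeAt c q)).map size).sum + 1) * hprod

theorem sum_hProd_div_hProd_removeAt (t : PreTree) :
    ((termPositions t).map fun q => (hProd t : ℚ) / hProd (removeAt t q)).sum = size t := by
  induction t using inductionOn with
  | node cs ih =>
  obtain rfl | hcs := eq_or_ne cs []
  · simp [← leaf_eq]
  have hS : (0 : ℚ) < sizeList cs := by
    obtain ⟨c, hc⟩ := List.exists_mem_of_ne_nil cs hcs
    exact_mod_cast (size_pos c).trans_le (size_le_sizeList hc)
  have hchild : ∀ x ∈ cs.zipIdx,
      ((termPositions x.1).map fun q =>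
          (hProd (node cs) : ℚ) / hProd (removeAt (node cs) (x.2 :: q))).sum =
        (1 + sizeList cs) / sizeList cs * size x.1 := by
    rintro ⟨c, j⟩ hx
    rw [← ih c (List.fst_mem_of_mem_zipIdx hx), ← List.sum_map_mul_left]
    refine congrArg List.sum (List.map_congr_left fun q hq => ?_)
    have key : (hProd (removeAt (node cs) (j :: q)) * size (node cs) * hProd c : ℚ) =
        hProd (node cs) * sizeList cs * hProd (removeAt c q) := by
      exact_mod_cast hProd_removeAt_node_mul hx hq
    have h1 : (hProd (removeAt (node cs) (j :: q)) : ℚ) ≠ 0 := by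
      exact_mod_cast (hProd_pos _).ne'
    have h2 : (hProd (removeAt c q) : ℚ) ≠ 0 := by exact_mod_cast (hProd_pos _).ne'
    rw [size_node, Nat.cast_add, Nat.cast_one] at key
    rw [div_mul_div_comm, div_eq_div_iff h1 (mul_ne_zero hS.ne' h2)]
    linear_combination -key
  rw [termPositions_node hcs, List.map_flatMap, List.flatMap_def, List.sum_flatten, List.map_map]
  simp only [Function.comp_def, List.map_map]
  rw [List.map_congr_left hchild,
    List.sum_map_zipIdx_fst fun c => (1 + sizeList cs : ℚ) / sizeList cs * size c,
    List.sum_map_mul_left, size_node]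
  have hsum : (cs.map fun c => (size c : ℚ)).sum = sizeList cs := by
    rw [sizeList_eq_sum, Nat.cast_list_sum, List.map_map]
    rfl
  rw [hsum, div_mul_cancel₀ _ hS.ne']
  push_cast
  rfl

/-! ### The weights `m(t)` and `n(t)` -/

theorem isCanon_and_size_of_mem_treeList : ∀ {n : ℕ} {t : PreTree}, t ∈ treeList n →
    IsCanon t ∧ size t = n
  | 0, t, h => by simp [treeList] at h
  | 1, t, h => by
    rw [treeList, List.mem_singleton] at h
    exact h ▸ ⟨isCanon_leaf, size_leaf⟩
  | n + 2, t, h => by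
    rw [treeList, List.mem_dedup, List.mem_flatMap] at h
    obtain ⟨u, hu, h⟩ := h
    obtain ⟨p, hp, rfl⟩ := List.mem_map.mp h
    refine ⟨isCanon_canon _, ?_⟩
    rw [size_canon, size_addLeafAt hp, (isCanon_and_size_of_mem_treeList hu).2]

theorem nodup_treeList (n : ℕ) : (treeList n).Nodup := by
  match n with
  | 0 => simp [treeList]
  | 1 => simp [treeList]
  | n + 2 => rw [treeList]; exact List.nodup_dedup _

theorem mem_treeList_size {t : PreTree} (ht : IsCanon t) : t ∈ treeList (size t) := by
  induction hn : size t using Nat.strong_induction_on generalizing t with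
  | _ n ih =>
  obtain rfl | hleaf := eq_or_ne t leaf
  · rw [← hn, size_leaf, treeList, List.mem_singleton]
  obtain ⟨m, rfl⟩ := Nat.exists_eq_add_of_le' (hn ▸ two_le_size_of_ne_leaf hleaf)
  obtain ⟨q, hq⟩ := List.exists_mem_of_ne_nil _ (termPositions_ne_nil t)
  have hs : size t = size (canon (removeAt t q)) + 1 := by
    rw [size_canon, size_removeAt hq hleaf]
  have hm : 0 < mcoef (canon (removeAt t q)) t :=
    List.length_pos_iff.mpr (List.ne_nil_of_mem (List.mem_filter.mpr ⟨hq, by simp⟩))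
  have hsc := isCanon_canon (removeAt t q)
  generalize canon (removeAt t q) = s at hs hm hsc
  -- By the exchange relation, the pruning at `q` can be undone by a growth step from `s`.
  have hn : 0 < ncoef s t := by
    have := mcoef_mul_sgOrder hsc ht hs
    have := Nat.mul_pos hm (sgOrder_pos s)
    exact Nat.pos_of_mul_pos_right (by omega : 0 < ncoef s t * sgOrder t)
  obtain ⟨p, hp⟩ := List.exists_mem_of_length_pos hn
  rw [List.mem_filter, decide_eq_true_eq] at hp
  rw [treeList, List.mem_dedup, List.mem_flatMap]
  exact ⟨s, ih (m + 1) (by omega) hsc (by omega), List.mem_map.mpr ⟨p, hp⟩⟩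

theorem mem_trees_iff {n : ℕ} {t : PreTree} : t ∈ trees n ↔ IsCanon t ∧ size t = n := by
  rw [trees, List.mem_toFinset]
  exact ⟨isCanon_and_size_of_mem_treeList, fun ⟨ht, hn⟩ => hn ▸ mem_treeList_size ht⟩

theorem sum_treeList_mcoef_smul {M : Type*} [AddCommMonoid M] {t : PreTree} (ht : t ≠ leaf)
    (f : PreTree → M) :
    ((treeList (size t - 1)).map fun s => mcoef s t • f s).sum =
      ((termPositions t).map fun q => f (canon (removeAt t q))).sum := by
  refine List.sum_map_length_filter_smul (fun q => canon (removeAt t q)) f (nodup_treeList _)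
    fun q hq => ?_
  have := mem_treeList_size (isCanon_canon (removeAt t q))
  rwa [size_canon, ← Nat.add_sub_cancel (size (removeAt t q)) 1, size_removeAt hq ht] at this

@[simp] theorem mWt_leaf : mWt leaf = 1 := by simp [mWt, mGen]

@[simp] theorem nWt_leaf : nWt leaf = 1 := by simp [nWt, nGen]

theorem mWt_eq_sum {t : PreTree} (ht : t ≠ leaf) :
    mWt t = ((treeList (size t - 1)).map fun s => mcoef s t * mWt s).sum := by
  obtain ⟨k, hk⟩ := Nat.exists_eq_add_of_le' (two_le_size_of_ne_leaf ht)
  rw [mWt, hk, show k + 2 - 1 = k + 1 from rfl, mGen, hk]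
  refine congrArg List.sum (List.map_congr_left fun s hs => ?_)
  rw [mWt, (isCanon_and_size_of_mem_treeList hs).2]
  rfl

theorem nWt_eq_sum {t : PreTree} (ht : t ≠ leaf) :
    nWt t = ((treeList (size t - 1)).map fun s => nWt s * ncoef s t).sum := by
  obtain ⟨k, hk⟩ := Nat.exists_eq_add_of_le' (two_le_size_of_ne_leaf ht)
  rw [nWt, hk, show k + 2 - 1 = k + 1 from rfl, nGen, size_leaf, add_comm 1 k]
  refine congrArg List.sum (List.map_congr_left fun s hs => ?_)
  rw [nWt, (isCanon_and_size_of_mem_treeList hs).2]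
  rfl

theorem nWt_mul_sgOrder {t : PreTree} (ht : IsCanon t) : nWt t * sgOrder t = mWt t := by
  induction hn : size t using Nat.strong_induction_on generalizing t with
  | _ n ih =>
  obtain rfl | hleaf := eq_or_ne t leaf
  · simp
  rw [nWt_eq_sum hleaf, mWt_eq_sum hleaf, ← List.sum_map_mul_right]
  refine congrArg List.sum (List.map_congr_left fun s hs => ?_)
  obtain ⟨hsc, hsize⟩ := isCanon_and_size_of_mem_treeList hs
  have hst : size t = size s + 1 := by have := two_le_size_of_ne_leaf hleaf; omega
  calc nWt s * ncoef s t * sgOrder t = nWt s * (mcoef s t * sgOrder s) := by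
        rw [mul_assoc, mcoef_mul_sgOrder hsc ht hst]
    _ = mcoef s t * (nWt s * sgOrder s) := by ring
    _ = mcoef s t * mWt s := by rw [ih (size s) (by omega) hsc rfl]

theorem mWt_mul_hProd (t : PreTree) : mWt t * hProd t = (size t).factorial := by
  induction hn : size t using Nat.strong_induction_on generalizing t with
  | _ n ih =>
  obtain rfl | hleaf := eq_or_ne t leaf
  · simp [← hn]
  obtain ⟨m, rfl⟩ := Nat.exists_eq_add_one.mpr (hn ▸ size_pos t)
  have hH : (hProd t : ℚ) ≠ 0 := by exact_mod_cast (hProd_pos t).ne'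
  have hchild : ∀ q ∈ termPositions t, (mWt (canon (removeAt t q)) : ℚ) =
      m.factorial / hProd t * (hProd t / hProd (removeAt t q)) := by
    intro q hq
    have hsize : size (canon (removeAt t q)) = m := by
      have := size_removeAt hq hleaf
      rw [size_canon]
      omega
    have := ih m (by omega) (canon (removeAt t q)) hsize
    rw [hProd_canon] at this
    have hq' : (hProd (removeAt t q) : ℚ) ≠ 0 := by exact_mod_cast (hProd_pos _).ne'
    rw [div_mul_div_cancel₀ hH, eq_div_iff hq']
    exact_mod_cast this
  have hsum : (mWt t : ℚ) = m.factorial / hProd t * (m + 1) := by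
    rw [mWt_eq_sum hleaf, Nat.cast_list_sum, List.map_map]
    simp only [Function.comp_def, Nat.cast_mul, ← nsmul_eq_mul]
    rw [sum_treeList_mcoef_smul hleaf (fun s => (mWt s : ℚ)), List.map_congr_left hchild,
      List.sum_map_mul_left, sum_hProd_div_hProd_removeAt, hn]
    push_cast
    rfl
  have : (mWt t * hProd t : ℚ) = (m + 1).factorial := by
    rw [hsum, Nat.factorial_succ]
    field_simp
    push_cast
    ring
  exact_mod_cast this

end PreTree

open PreTree in
/-- For every rooted unlabeled tree `t` on `n` vertices,
`π_n(t) = m(t) n(t) / ∏_{i=2}^n C(i,2) = n · 2^{n-1} / (|SG(t)| ∏_{v ∈ t} h(v)²)`,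
where `h(v)` is the number of vertices of the subtree rooted at `v` and `SG(t)`
is the symmetry group of `t`. -/
theorem piM_eq_symmetry_formula (n : ℕ) (hn : 1 ≤ n) (t : PreTree) (ht : t ∈ trees n) :
    (mWt t * nWt t : ℚ) / ∏ i ∈ Finset.Icc 2 n, (Nat.choose i 2 : ℚ)
      = ((n : ℚ) * 2 ^ (n - 1)) / ((sgOrder t : ℚ) * (hProd t : ℚ) ^ 2) := by
  obtain ⟨hcanon, rfl⟩ := mem_trees_iff.mp ht
  obtain ⟨m, hm⟩ : ∃ m, size t = m + 1 := Nat.exists_eq_add_one.mpr (size_pos t)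
  have hmW : (mWt t * hProd t : ℚ) = (m + 1).factorial := by
    exact_mod_cast hm ▸ mWt_mul_hProd t
  have hnW : (nWt t * sgOrder t : ℚ) = mWt t := by exact_mod_cast nWt_mul_sgOrder hcanon
  have hchoose : (∏ i ∈ Finset.Icc 2 (m + 1), (i.choose 2 : ℚ)) * 2 ^ m =
      (m + 1).factorial * m.factorial := by exact_mod_cast Nat.prod_Icc_choose_two_mul_two_pow m
  have hP : ∏ i ∈ Finset.Icc 2 (m + 1), (i.choose 2 : ℚ) ≠ 0 :=
    Finset.prod_ne_zero_iff.mpr fun i hi => by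
      have := (Finset.mem_Icc.mp hi).1
      exact_mod_cast (Nat.choose_pos this).ne'
  have hH : (hProd t : ℚ) ≠ 0 := by exact_mod_cast (hProd_pos t).ne'
  have hσ : (sgOrder t : ℚ) ≠ 0 := by exact_mod_cast (sgOrder_pos t).ne'
  rw [hm, Nat.add_sub_cancel, div_eq_div_iff hP (mul_ne_zero hσ (pow_ne_zero 2 hH))]
  push_cast [Nat.factorial_succ] at hmW hchoose ⊢
  linear_combination (mWt t * hProd t ^ 2 : ℚ) * hnW +
    (mWt t * hProd t + (m + 1) * m.factorial) * hmW - (m + 1) * hchoose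

end RootedTreeChain
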